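/- Let a = (a₁,a₂) ∈ ℤ², b ∈ ℕ with gcd(a₁,a₂,b) = 1, and 0 < ε < 1. Then for all real N ≥ 1, the number of integers h with 1 ≤ h ≤ N such that ‖h·(a/b)‖ < ε is at most a universal constant times ((εb + 1)·(N/b) if N ≥ b, and min(N, εb) if N < b). -/

import Mathlib

/-!
Let `s(h) ∈ ℤ²` be the residue of `h • a` modulo `b` nearest to `0`, so that `‖h • a / b‖ < ε`
means `|s(h)| < ε b`. Put `d = gcd(b, a₁)` and `m = b / d`. Then `d ∣ s₁(h)`; knowing `s₁(h)`
determines `h` modulo `m`, hence `s₂(h)` modulo `m`; and since `gcd(a₁, a₂, b) = 1`, the pair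
`s(h)` determines `h` modulo `b`. So `h ↦ (s₁(h) / d, s₂(h) / m, h / b)` is injective, and on the
Bohr set it takes at most `(2εb/d + 2)(2εb/m + 2)(N/b + 1)` values; as `(εb/d)(εb/m) = ε²b`
this is `O((εb + 1)(N/b + 1))`. For `N < b` only the block `h / b = 0` occurs, and if also
`εb < 1` then `s(h) = 0`, which forces `b ∣ h`, impossible for `1 ≤ h < b`.
-/

noncomputable def nint2 (x : ℝ × ℝ) : ℝ := max |x.1 - round x.1| |x.2 - round x.2|

noncomputable def nearestResidue (b : ℕ) (x : ℤ) : ℤ := x - b * round ((x : ℝ) / b)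

theorem nearestResidue_modEq (b : ℕ) (x : ℤ) : nearestResidue b x ≡ x [ZMOD b] :=
  Int.sub_modulus_mul_modEq_iff.mpr rfl

@[simp]
theorem nearestResidue_zero (b : ℕ) : nearestResidue b 0 = 0 := by
  simp [nearestResidue]

theorem abs_nearestResidue_mul_lt {b : ℕ} (hb : 0 < b) {h : ℕ} {a : ℤ} {ε : ℝ}
    (hε : |(h : ℝ) * (a / b) - round ((h : ℝ) * (a / b))| < ε) :
    |(nearestResidue b (h * a) : ℝ)| < ε * b := by
  have hb' : (0 : ℝ) < b := by exact_mod_cast hb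
  have hres : (nearestResidue b (h * a) : ℝ) =
      b * ((h : ℝ) * (a / b) - round ((h : ℝ) * (a / b))) := by
    simp only [nearestResidue, Int.cast_sub, Int.cast_mul, Int.cast_natCast]
    field_simp
  rw [hres, abs_mul, abs_of_pos hb', mul_comm ε]
  gcongr

theorem Int.ModEq.eq_of_ediv_eq {m x y : ℤ} (hxy : x ≡ y [ZMOD m]) (hq : x / m = y / m) :
    x = y := by
  rw [← Int.mul_ediv_add_emod x m, ← Int.mul_ediv_add_emod y m, hq, hxy.eq]

theorem Int.ModEq.cancel_right_of_gcd_eq_one {b a₁ a₂ h h' : ℤ}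
    (hcop : Int.gcd (Int.gcd a₁ a₂ : ℤ) b = 1)
    (h₁ : h * a₁ ≡ h' * a₁ [ZMOD b]) (h₂ : h * a₂ ≡ h' * a₂ [ZMOD b]) : h ≡ h' [ZMOD b] := by
  rw [Int.modEq_iff_dvd] at *
  have hg : b ∣ (h' - h) * Int.gcd a₁ a₂ := by
    have hbezout : (h' - h) * Int.gcd a₁ a₂ =
        (h' * a₁ - h * a₁) * a₁.gcdA a₂ + (h' * a₂ - h * a₂) * a₁.gcdB a₂ := by
      rw [Int.gcd_eq_gcd_ab]; ring
    rw [hbezout]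
    exact dvd_add (h₁.mul_right _) (h₂.mul_right _)
  exact (Int.isCoprime_iff_gcd_eq_one.mpr (by rwa [Int.gcd_comm])).dvd_of_dvd_mul_right hg

theorem Int.ediv_mem_Icc_floor {x : ℤ} {m : ℕ} {R : ℝ} (hx : |(x : ℝ)| < R) :
    x / (m : ℤ) ∈ Finset.Icc ⌊-R / m⌋ ⌊R / m⌋ := by
  rw [← Int.floor_intCast (R := ℝ) x, ← Int.floor_div_natCast, Finset.mem_Icc]
  obtain ⟨hlo, hhi⟩ := abs_lt.mp hx
  exact ⟨Int.floor_mono (by gcongr), Int.floor_mono (by gcongr)⟩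

theorem card_Icc_floor_neg_floor_le {t : ℝ} (ht : 0 ≤ t) :
    ((Finset.Icc ⌊-t⌋ ⌊t⌋).card : ℝ) ≤ 2 * t + 2 := by
  have hle : ⌊-t⌋ ≤ ⌊t⌋ := Int.floor_mono (by linarith)
  have hcard : ((Finset.Icc ⌊-t⌋ ⌊t⌋).card : ℝ) = ⌊t⌋ + 1 - ⌊-t⌋ := by
    rw [Int.card_Icc]
    exact_mod_cast Int.toNat_of_nonneg (by omega)
  rw [hcard]
  linarith [Int.floor_le t, Int.lt_floor_add_one (-t)]

theorem cast_floor_div_add_one_le {b : ℕ} {N : ℝ} (hb : 0 < b) (hbN : (b : ℝ) ≤ N) :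
    ((⌊N⌋₊ / b + 1 : ℕ) : ℝ) ≤ 2 * (N / b) := by
  have hb' : (0 : ℝ) < b := by exact_mod_cast hb
  have hfloor : ((⌊N⌋₊ / b : ℕ) : ℝ) ≤ N / b :=
    Nat.cast_div_le.trans (by gcongr; exact Nat.floor_le (hb'.le.trans hbN))
  have hone : 1 ≤ N / b := (one_le_div hb').mpr hbN
  push_cast
  linarith

section BohrSet

variable (a : ℤ × ℤ) (b : ℕ)

def bohrSet (ε N : ℝ) : Set ℕ :=
  {h : ℕ | 1 ≤ h ∧ (h : ℝ) ≤ N ∧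
    nint2 ((h : ℝ) * ((a.1 : ℝ) / b), (h : ℝ) * ((a.2 : ℝ) / b)) < ε}

noncomputable def bohrSignature (h : ℕ) : ℤ × ℤ × ℕ :=
  (nearestResidue b (h * a.1) / Int.gcd b a.1,
    nearestResidue b (h * a.2) / (b / Int.gcd b a.1 : ℕ), h / b)

variable {a b}

theorem bohrSignature_injective (hb : 0 < b) (hcop : Int.gcd (Int.gcd a.1 a.2 : ℤ) b = 1) :
    Function.Injective (bohrSignature a b) := by
  intro h h' heq
  simp only [bohrSignature, Prod.mk.injEq] at heq
  obtain ⟨hq₁, hq₂, hq₃⟩ := heq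
  have hd : (Int.gcd b a.1 : ℤ) ∣ b := Int.gcd_dvd_left ..
  have hm : ((b / Int.gcd b a.1 : ℕ) : ℤ) = b / Int.gcd b a.1 := by push_cast; rfl
  have hres₁ : ∀ k : ℕ, nearestResidue b (k * a.1) ≡ 0 [ZMOD Int.gcd b a.1] := fun k =>
    ((nearestResidue_modEq b _).of_dvd hd).trans
      (Int.modEq_zero_iff_dvd.mpr ((Int.gcd_dvd_right ..).mul_left _))
  have hs₁ := ((hres₁ h).trans (hres₁ h').symm).eq_of_ediv_eq hq₁
  have hmod₁ : (h : ℤ) * a.1 ≡ h' * a.1 [ZMOD b] :=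
    (nearestResidue_modEq b _).symm.trans (hs₁ ▸ nearestResidue_modEq b _)
  have hmodm : (h : ℤ) ≡ h' [ZMOD (b / Int.gcd b a.1 : ℕ)] :=
    hm ▸ hmod₁.cancel_right_div_gcd (by exact_mod_cast hb)
  have hm_dvd : ((b / Int.gcd b a.1 : ℕ) : ℤ) ∣ b := hm ▸ Int.ediv_dvd_of_dvd hd
  have hs₂ : nearestResidue b (h * a.2) = nearestResidue b (h' * a.2) := by
    refine Int.ModEq.eq_of_ediv_eq ?_ hq₂
    exact ((nearestResidue_modEq b _).of_dvd hm_dvd).trans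
      ((hmodm.mul_right _).trans ((nearestResidue_modEq b _).of_dvd hm_dvd).symm)
  have hmod₂ : (h : ℤ) * a.2 ≡ h' * a.2 [ZMOD b] :=
    (nearestResidue_modEq b _).symm.trans (hs₂ ▸ nearestResidue_modEq b _)
  have hmod : h ≡ h' [MOD b] :=
    Int.natCast_modEq_iff.mp (hmod₁.cancel_right_of_gcd_eq_one hcop hmod₂)
  rw [← Nat.div_add_mod h b, ← Nat.div_add_mod h' b, hq₃, hmod]

theorem ncard_bohrSet_le (hb : 0 < b) (hcop : Int.gcd (Int.gcd a.1 a.2 : ℤ) b = 1) {ε : ℝ}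
    (hε₀ : 0 ≤ ε) (hε₁ : ε ≤ 1) (N : ℝ) :
    ((bohrSet a b ε N).ncard : ℝ) ≤ 4 * (3 * (ε * b) + 1) * (⌊N⌋₊ / b + 1 : ℕ) := by
  set d : ℕ := Int.gcd b a.1
  set m : ℕ := b / d
  have hdvd : d ∣ b := Int.natCast_dvd_natCast.mp (Int.gcd_dvd_left ..)
  have hd₀ : 0 < d := Int.gcd_pos_of_ne_zero_left _ (by exact_mod_cast hb.ne')
  have hb' : (0 : ℝ) < b := by exact_mod_cast hb
  have hdm : (d : ℝ) * m = b := by exact_mod_cast Nat.mul_div_cancel' hdvd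
  have hd : (1 : ℝ) ≤ d := by exact_mod_cast hd₀
  have hm : (1 : ℝ) ≤ m := by exact_mod_cast Nat.div_pos (Nat.le_of_dvd hb hdvd) hd₀
  set box : Finset (ℤ × ℤ × ℕ) := Finset.Icc ⌊-(ε * b) / d⌋ ⌊ε * b / d⌋ ×ˢ
    Finset.Icc ⌊-(ε * b) / m⌋ ⌊ε * b / m⌋ ×ˢ Finset.range (⌊N⌋₊ / b + 1)
  have hmaps : ∀ h ∈ bohrSet a b ε N, bohrSignature a b h ∈ (box : Set (ℤ × ℤ × ℕ)) := by
    rintro h ⟨-, hhN, hnint⟩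
    rw [nint2, max_lt_iff] at hnint
    simp only [box, Finset.coe_product, Set.mem_prod, Finset.mem_coe, Finset.mem_range]
    exact ⟨Int.ediv_mem_Icc_floor (abs_nearestResidue_mul_lt hb hnint.1),
      Int.ediv_mem_Icc_floor (abs_nearestResidue_mul_lt hb hnint.2),
      Nat.lt_succ_of_le (Nat.div_le_div_right (Nat.le_floor hhN))⟩
  have hbox : (box.card : ℝ) ≤
      (2 * (ε * b / d) + 2) * ((2 * (ε * b / m) + 2) * (⌊N⌋₊ / b + 1 : ℕ)) := by
    simp only [box, Finset.card_product, Finset.card_range, Nat.cast_mul, neg_div]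
    gcongr <;> exact card_Icc_floor_neg_floor_le (by positivity)
  have hprod : (ε * b / d) * (ε * b / m) ≤ ε * b := by
    rw [div_mul_div_comm, hdm, div_le_iff₀ hb']
    exact mul_le_mul_of_nonneg_left (mul_le_of_le_one_left hb'.le hε₁) (by positivity)
  have hfactor : (2 * (ε * b / d) + 2) * (2 * (ε * b / m) + 2) ≤ 4 * (3 * (ε * b) + 1) := by
    have hεb : 0 ≤ ε * b := by positivity
    nlinarith [div_le_self hεb hd, div_le_self hεb hm]
  calc ((bohrSet a b ε N).ncard : ℝ) ≤ box.card := by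
        exact_mod_cast (Set.ncard_coe_finset box) ▸
          Set.ncard_le_ncard_of_injOn _ hmaps (bohrSignature_injective hb hcop).injOn
    _ ≤ _ := hbox
    _ ≤ 4 * (3 * (ε * b) + 1) * (⌊N⌋₊ / b + 1 : ℕ) := by
        rw [← mul_assoc]
        exact mul_le_mul_of_nonneg_right hfactor (by positivity)

theorem bohrSet_eq_empty (hb : 0 < b) (hcop : Int.gcd (Int.gcd a.1 a.2 : ℤ) b = 1) {ε N : ℝ}
    (hεb : ε * b ≤ 1) (hN : N < b) : bohrSet a b ε N = ∅ := by
  refine Set.eq_empty_of_forall_notMem fun h ⟨h1, hhN, hnint⟩ => ?_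
  rw [nint2, max_lt_iff] at hnint
  have hzero : ∀ {x : ℤ}, |(x : ℝ)| < ε * b → x = 0 := fun hx =>
    Int.abs_lt_one_iff.mp (by exact_mod_cast hx.trans_le hεb)
  have hsig : bohrSignature a b h = bohrSignature a b 0 := by
    have hhb : h < b := by exact_mod_cast hhN.trans_lt hN
    simp [bohrSignature, hzero (abs_nearestResidue_mul_lt hb hnint.1),
      hzero (abs_nearestResidue_mul_lt hb hnint.2), Nat.div_eq_of_lt hhb]
  exact absurd (bohrSignature_injective hb hcop hsig) (by omega)

theorem ncard_bohrSet_le_floor (ε N : ℝ) : (bohrSet a b ε N).ncard ≤ ⌊N⌋₊ := by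
  calc (bohrSet a b ε N).ncard ≤ (Finset.Icc 1 ⌊N⌋₊ : Set ℕ).ncard :=
        Set.ncard_le_ncard (fun h hh => Finset.mem_Icc.mpr ⟨hh.1, Nat.le_floor hh.2.1⟩)
    _ = ⌊N⌋₊ := by simp

end BohrSet

theorem bohr_partial_orbit :
    ∃ C : ℝ, 0 < C ∧ ∀ (a : ℤ × ℤ) (b : ℕ), 0 < b →
      Int.gcd (Int.gcd a.1 a.2 : ℤ) (b : ℤ) = 1 →
      ∀ ε : ℝ, 0 < ε → ε < 1 → ∀ N : ℝ, 1 ≤ N →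
      (({h : ℕ | 1 ≤ h ∧ (h : ℝ) ≤ N ∧
          nint2 ((h : ℝ) * ((a.1 : ℝ) / b), (h : ℝ) * ((a.2 : ℝ) / b)) < ε}.ncard : ℝ))
        ≤ C * (if (b : ℝ) ≤ N then (ε * b + 1) * (N / b) else min N (ε * b)) := by
  refine ⟨24, by norm_num, fun a b hb hcop ε hε₀ hε₁ N hN => ?_⟩
  change ((bohrSet a b ε N).ncard : ℝ) ≤ _
  have hb' : (0 : ℝ) < b := by exact_mod_cast hb
  have hcount := ncard_bohrSet_le hb hcop hε₀.le hε₁.le N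
  split_ifs with hbN
  · have hblocks := cast_floor_div_add_one_le hb hbN
    calc _ ≤ 4 * (3 * (ε * b) + 1) * (2 * (N / b)) :=
          hcount.trans (mul_le_mul_of_nonneg_left hblocks (by positivity))
      _ ≤ 24 * ((ε * b + 1) * (N / b)) := by nlinarith [div_nonneg (by linarith : 0 ≤ N) hb'.le]
  · rw [not_le] at hbN
    rcases lt_or_ge (ε * b) 1 with hεb | hεb
    · rw [bohrSet_eq_empty hb hcop hεb.le hbN, Set.ncard_empty, Nat.cast_zero]
      positivity
    · have hone_block : ⌊N⌋₊ / b = 0 := Nat.div_eq_of_lt (Nat.floor_lt (by linarith) |>.mpr hbN)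
      have hlarge : ((bohrSet a b ε N).ncard : ℝ) ≤ 16 * (ε * b) := by
        rw [hone_block] at hcount
        push_cast at hcount
        linarith
      have hsmall : ((bohrSet a b ε N).ncard : ℝ) ≤ N :=
        (Nat.cast_le.mpr (ncard_bohrSet_le_floor ε N)).trans (Nat.floor_le (by linarith))
      rcases min_cases N (ε * b) with ⟨hmin, -⟩ | ⟨hmin, -⟩ <;> rw [hmin] <;> linarith
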